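/- Cut principle for non-disclosure: let lcut be an undirected cut between lsrc and lobs in a frame F. If there is no disclosure between lsrc and lcut, then there is no disclosure between lsrc and lobs. -/
import Mathlib


open scoped Classical

/-- A (static) frame: locations `LO`, channels `CH`, data values `D`.
Each channel has a sender and a recipient location; each location carries a
prefix-closed set of finite-or-infinite sequences of labels, where a label for
`ℓ` is a pair `(c, v)` with `c` a channel of `ℓ` and `v ∈ D`.  Sequences are
represented as functions `ℕ → Option (CH × D)` whose domain is an initial
segment of `ℕ`. -/
structure Frame (LO CH D : Type) where
  sender : CH → LO
  recipt : CH → LO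
  traces : LO → Set (ℕ → Option (CH × D))
  traces_dom : ∀ ℓ, ∀ t ∈ traces ℓ, ∀ m n : ℕ, m ≤ n → t n ≠ none → t m ≠ none
  traces_labels : ∀ ℓ, ∀ t ∈ traces ℓ, ∀ n c v, t n = some (c, v) →
    sender c = ℓ ∨ recipt c = ℓ
  traces_prefix : ∀ ℓ, ∀ t ∈ traces ℓ, ∀ n : ℕ,
    (fun m => if m < n then t m else none) ∈ traces ℓ

/-- Raw data of a system of events: a carrier set of events with a relation. -/
structure EvStruct (E : Type) where
  carrier : Set E
  rel : E → E → Prop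

variable {LO CH D E : Type}

/-- `B` is a system of events: `rel` is a partial order on `carrier`, and every
event has only finitely many predecessors. -/
def IsSysEv (B : EvStruct E) : Prop :=
  (∀ a b, B.rel a b → a ∈ B.carrier ∧ b ∈ B.carrier) ∧
  (∀ a ∈ B.carrier, B.rel a a) ∧
  (∀ a b, B.rel a b → B.rel b a → a = b) ∧
  (∀ a b c, B.rel a b → B.rel b c → B.rel a c) ∧
  (∀ a ∈ B.carrier, {x | B.rel x a}.Finite)

/-- `B1` is a substructure of `B2`: carrier included, order the restriction. -/
def Substructure (B1 B2 : EvStruct E) : Prop :=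
  B1.carrier ⊆ B2.carrier ∧
  ∀ a b, B1.rel a b ↔ (a ∈ B1.carrier ∧ b ∈ B1.carrier ∧ B2.rel a b)

/-- Initial substructure: a substructure that is downward closed. -/
def InitialSubstructure (B1 B2 : EvStruct E) : Prop :=
  Substructure B1 B2 ∧ ∀ y ∈ B1.carrier, ∀ x, B2.rel x y → x ∈ B1.carrier

/-- The events of `B` whose channel has `ℓ` as sender or recipient. -/
def evProj (F : Frame LO CH D) (chan : E → CH) (B : EvStruct E) (ℓ : LO) : Set E :=
  {e | e ∈ B.carrier ∧ (F.sender (chan e) = ℓ ∨ F.recipt (chan e) = ℓ)}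

/-- The projection of `B` to location `ℓ`, viewed as a sequence of labels:
the `n`-th entry is the label of the event of `evProj F chan B ℓ` having
exactly `n` strict predecessors there. -/
noncomputable def projSeq (F : Frame LO CH D) (chan : E → CH) (msg : E → D)
    (B : EvStruct E) (ℓ : LO) : ℕ → Option (CH × D) := fun n =>
  if h : ∃ e, e ∈ evProj F chan B ℓ ∧
      Set.ncard {e' | e' ∈ evProj F chan B ℓ ∧ B.rel e' e ∧ e' ≠ e} = n
  then some (chan h.choose, msg h.choose)
  else none

/-- `B` is an execution of `F`: a system of events whose projection to each
location is linearly ordered and, viewed as a sequence, a trace of that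
location. -/
def IsExec (F : Frame LO CH D) (chan : E → CH) (msg : E → D) (B : EvStruct E) : Prop :=
  IsSysEv B ∧ ∀ ℓ : LO,
    (∀ a ∈ evProj F chan B ℓ, ∀ b ∈ evProj F chan B ℓ, B.rel a b ∨ B.rel b a) ∧
    projSeq F chan msg B ℓ ∈ F.traces ℓ

/-- Restriction `B|C` of `B` to the events whose channel lies in `C`. -/
def evRestrict (chan : E → CH) (B : EvStruct E) (C : Set CH) : EvStruct E where
  carrier := {e | e ∈ B.carrier ∧ chan e ∈ C}
  rel := fun a b => B.rel a b ∧ chan a ∈ C ∧ chan b ∈ C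

/-- `lruns C`: the `C`-runs of `F`, i.e. restrictions to `C` of executions. -/
def lruns (F : Frame LO CH D) (chan : E → CH) (msg : E → D) (C : Set CH) :
    Set (EvStruct E) :=
  {B | ∃ A : EvStruct E, IsExec F chan msg A ∧ evRestrict chan A C = B}

/-- `J_{C→C'}(B)`: the `C'`-runs compatible with `B`. -/
def cmpt (F : Frame LO CH D) (chan : E → CH) (msg : E → D)
    (C C' : Set CH) (B : EvStruct E) : Set (EvStruct E) :=
  {B' | ∃ A : EvStruct E, IsExec F chan msg A ∧
      evRestrict chan A C = B ∧ evRestrict chan A C' = B'}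

/-- `F` has no disclosure from `C` to `C'`. -/
def NoDisclosure (F : Frame LO CH D) (chan : E → CH) (msg : E → D)
    (C C' : Set CH) : Prop :=
  ∀ B ∈ lruns F chan msg C, cmpt F chan msg C C' B = lruns F chan msg C'

/-- The locations that are sender or recipient of some channel in `C`. -/
def pends (F : Frame LO CH D) (C : Set CH) : Set LO :=
  {ℓ | ∃ c ∈ C, F.sender c = ℓ ∨ F.recipt c = ℓ}

/-- Adjacency in the undirected graph of `F` via a channel avoiding `K`. -/
def adjAvoiding (F : Frame LO CH D) (K : Set CH) (ℓ1 ℓ2 : LO) : Prop :=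
  ∃ c, c ∉ K ∧
    ((F.sender c = ℓ1 ∧ F.recipt c = ℓ2) ∨ (F.sender c = ℓ2 ∧ F.recipt c = ℓ1))

/-- `lcut` is an undirected cut between `lsrc` and `lobs`: the three sets are
pairwise disjoint and every undirected path from a location of `pends lobs`
to a location of `pends lsrc` traverses some channel of `lcut`, i.e. there is
no path avoiding `lcut`. -/
def IsCut (F : Frame LO CH D) (lsrc lcut lobs : Set CH) : Prop :=
  (Disjoint lsrc lcut ∧ Disjoint lsrc lobs ∧ Disjoint lcut lobs) ∧
  ∀ ℓ1 ∈ pends F lobs, ∀ ℓ2 ∈ pends F lsrc,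
    ¬ Relation.ReflTransGen (adjAvoiding F lcut) ℓ1 ℓ2


/-! ### Auxiliary development for the cut principle -/

lemma predFin {B : EvStruct E} (hB : IsSysEv B) (a : E) : {x | B.rel x a}.Finite := by
  by_cases h : a ∈ B.carrier
  · exact hB.2.2.2.2 a h
  · have : {x | B.rel x a} = ∅ := by
      ext x; simp only [Set.mem_setOf_eq, Set.mem_empty_iff_false, iff_false]
      intro hx; exact h (hB.1 x a hx).2
    rw [this]; exact Set.finite_empty

lemma projSeq_congr (F : Frame LO CH D) (chan : E → CH) (msg : E → D)
    (B1 B2 : EvStruct E) (ℓ : LO)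
    (hset : evProj F chan B1 ℓ = evProj F chan B2 ℓ)
    (hrel : ∀ a ∈ evProj F chan B1 ℓ, ∀ b ∈ evProj F chan B1 ℓ,
      (B1.rel a b ↔ B2.rel a b)) :
    projSeq F chan msg B1 ℓ = projSeq F chan msg B2 ℓ := by
  funext n
  have hpred : (fun e => e ∈ evProj F chan B1 ℓ ∧
      Set.ncard {e' | e' ∈ evProj F chan B1 ℓ ∧ B1.rel e' e ∧ e' ≠ e} = n) =
      (fun e => e ∈ evProj F chan B2 ℓ ∧
      Set.ncard {e' | e' ∈ evProj F chan B2 ℓ ∧ B2.rel e' e ∧ e' ≠ e} = n) := by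
    funext e
    apply propext
    by_cases he : e ∈ evProj F chan B1 ℓ
    · have hsets : {e' | e' ∈ evProj F chan B1 ℓ ∧ B1.rel e' e ∧ e' ≠ e} =
          {e' | e' ∈ evProj F chan B2 ℓ ∧ B2.rel e' e ∧ e' ≠ e} := by
        ext e'
        simp only [Set.mem_setOf_eq, ← hset]
        constructor
        · rintro ⟨h1, h2, h3⟩; exact ⟨h1, (hrel e' h1 e he).1 h2, h3⟩
        · rintro ⟨h1, h2, h3⟩; exact ⟨h1, (hrel e' h1 e he).2 h2, h3⟩
      rw [hsets, hset]
    · constructor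
      · rintro ⟨h1, _⟩; exact absurd h1 he
      · rintro ⟨h1, _⟩; exact absurd (hset ▸ h1) he
  unfold projSeq
  rw [hpred]

/-- Locations reachable from `pends lobs` avoiding `lcut`. -/
def Rset (F : Frame LO CH D) (lcut lobs : Set CH) : Set LO :=
  {ℓ | ∃ ℓ0 ∈ pends F lobs, Relation.ReflTransGen (adjAvoiding F lcut) ℓ0 ℓ}

/-- Channels on the observer side of the cut. -/
def Ochan (F : Frame LO CH D) (lcut lobs : Set CH) : Set CH :=
  {c | c ∉ lcut ∧ (F.sender c ∈ Rset F lcut lobs ∨ F.recipt c ∈ Rset F lcut lobs)}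

lemma Ochan_ends {F : Frame LO CH D} {lcut lobs : Set CH} {c : CH}
    (hc : c ∈ Ochan F lcut lobs) :
    F.sender c ∈ Rset F lcut lobs ∧ F.recipt c ∈ Rset F lcut lobs := by
  obtain ⟨hc1, hc2⟩ := hc
  rcases hc2 with h | h
  · refine ⟨h, ?_⟩
    obtain ⟨ℓ0, hℓ0, hpath⟩ := h
    exact ⟨ℓ0, hℓ0, hpath.tail ⟨c, hc1, Or.inl ⟨rfl, rfl⟩⟩⟩
  · refine ⟨?_, h⟩
    obtain ⟨ℓ0, hℓ0, hpath⟩ := h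
    exact ⟨ℓ0, hℓ0, hpath.tail ⟨c, hc1, Or.inr ⟨rfl, rfl⟩⟩⟩

/-- The gluing construction: observer-side events (channels in `O ∪ K`) come
from `A'`, the remaining events from `A''`; cross relations are mediated by
cut (`K`) events. -/
def glue (chan : E → CH) (O K : Set CH) (A' A'' : EvStruct E) : EvStruct E where
  carrier := {e | (e ∈ A'.carrier ∧ chan e ∈ O ∪ K) ∨ (e ∈ A''.carrier ∧ chan e ∉ O)}
  rel := fun a b =>
    ((a ∈ A'.carrier ∧ chan a ∈ O ∪ K) ∧ (b ∈ A'.carrier ∧ chan b ∈ O ∪ K) ∧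
      A'.rel a b) ∨
    ((a ∈ A''.carrier ∧ chan a ∉ O) ∧ (b ∈ A''.carrier ∧ chan b ∉ O) ∧
      A''.rel a b) ∨
    ((a ∈ A'.carrier ∧ chan a ∈ O ∪ K) ∧ (b ∈ A''.carrier ∧ chan b ∉ O) ∧
      ∃ m, chan m ∈ K ∧ A'.rel a m ∧ A''.rel m b) ∨
    ((a ∈ A''.carrier ∧ chan a ∉ O) ∧ (b ∈ A'.carrier ∧ chan b ∈ O ∪ K) ∧
      ∃ m, chan m ∈ K ∧ A''.rel a m ∧ A'.rel m b)

section GlueFacts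

variable {F : Frame LO CH D} {chan : E → CH} {msg : E → D}
variable {O K : Set CH} {A' A'' : EvStruct E}

lemma glue_carrier_iff {e : E} :
    e ∈ (glue chan O K A' A'').carrier ↔
      (e ∈ A'.carrier ∧ chan e ∈ O ∪ K) ∨ (e ∈ A''.carrier ∧ chan e ∉ O) := Iff.rfl

lemma glue_rel_iff {a b : E} :
    (glue chan O K A' A'').rel a b ↔
    (((a ∈ A'.carrier ∧ chan a ∈ O ∪ K) ∧ (b ∈ A'.carrier ∧ chan b ∈ O ∪ K) ∧
      A'.rel a b) ∨
    ((a ∈ A''.carrier ∧ chan a ∉ O) ∧ (b ∈ A''.carrier ∧ chan b ∉ O) ∧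
      A''.rel a b) ∨
    ((a ∈ A'.carrier ∧ chan a ∈ O ∪ K) ∧ (b ∈ A''.carrier ∧ chan b ∉ O) ∧
      ∃ m, chan m ∈ K ∧ A'.rel a m ∧ A''.rel m b) ∨
    ((a ∈ A''.carrier ∧ chan a ∉ O) ∧ (b ∈ A'.carrier ∧ chan b ∈ O ∪ K) ∧
      ∃ m, chan m ∈ K ∧ A''.rel a m ∧ A'.rel m b)) := Iff.rfl

lemma glue_bth {e : E} (h1 : e ∈ A'.carrier ∧ chan e ∈ O ∪ K)
    (h2 : e ∈ A''.carrier ∧ chan e ∉ O) : chan e ∈ K := by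
  rcases h1.2 with h | h
  · exact absurd h h2.2
  · exact h

/-- On observer-side pairs, the glued relation coincides with `A'`. -/
lemma glue_relA' (hA' : IsSysEv A')
    (hKrel : ∀ a b, chan a ∈ K → chan b ∈ K → (A''.rel a b ↔ A'.rel a b))
    {a b : E} (ha : a ∈ A'.carrier ∧ chan a ∈ O ∪ K)
    (hb : b ∈ A'.carrier ∧ chan b ∈ O ∪ K) :
    (glue chan O K A' A'').rel a b ↔ A'.rel a b := by
  constructor
  · rintro (⟨_, _, h⟩ | ⟨ha2, hb2, h⟩ | ⟨_, hb2, m, hm, h1, h2⟩ | ⟨ha2, _, m, hm, h1, h2⟩)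
    · exact h
    · exact (hKrel a b (glue_bth ha ha2) (glue_bth hb hb2)).1 h
    · exact hA'.2.2.2.1 _ _ _ h1 ((hKrel m b hm (glue_bth hb hb2)).1 h2)
    · exact hA'.2.2.2.1 _ _ _ ((hKrel a m (glue_bth ha ha2) hm).1 h1) h2
  · intro h; exact Or.inl ⟨ha, hb, h⟩

/-- On source-side pairs, the glued relation coincides with `A''`. -/
lemma glue_relA'' (hA'' : IsSysEv A'')
    (hKrel : ∀ a b, chan a ∈ K → chan b ∈ K → (A''.rel a b ↔ A'.rel a b))
    {a b : E} (ha : a ∈ A''.carrier ∧ chan a ∉ O)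
    (hb : b ∈ A''.carrier ∧ chan b ∉ O) :
    (glue chan O K A' A'').rel a b ↔ A''.rel a b := by
  constructor
  · rintro (⟨ha2, hb2, h⟩ | ⟨_, _, h⟩ | ⟨ha2, _, m, hm, h1, h2⟩ | ⟨_, hb2, m, hm, h1, h2⟩)
    · exact (hKrel a b (glue_bth ha2 ha) (glue_bth hb2 hb)).2 h
    · exact h
    · exact hA''.2.2.2.1 _ _ _ ((hKrel a m (glue_bth ha2 ha) hm).2 h1) h2
    · exact hA''.2.2.2.1 _ _ _ h1 ((hKrel m b hm (glue_bth hb2 hb)).2 h2)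
  · intro h; exact Or.inr (Or.inl ⟨ha, hb, h⟩)

lemma glue_sysEv (hA' : IsSysEv A') (hA'' : IsSysEv A'')
    (hKrel : ∀ a b, chan a ∈ K → chan b ∈ K → (A''.rel a b ↔ A'.rel a b)) :
    IsSysEv (glue chan O K A' A'') := by
  obtain ⟨hdom', hrefl', hanti', htrans', hfin'⟩ := hA'
  obtain ⟨hdom'', hrefl'', hanti'', htrans'', hfin''⟩ := hA''
  have hS' : IsSysEv A' := ⟨hdom', hrefl', hanti', htrans', hfin'⟩
  have hS'' : IsSysEv A'' := ⟨hdom'', hrefl'', hanti'', htrans'', hfin''⟩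
  refine ⟨?_, ?_, ?_, ?_, ?_⟩
  · rintro a b (⟨ha, hb, _⟩ | ⟨ha, hb, _⟩ | ⟨ha, hb, _⟩ | ⟨ha, hb, _⟩)
    · exact ⟨Or.inl ha, Or.inl hb⟩
    · exact ⟨Or.inr ha, Or.inr hb⟩
    · exact ⟨Or.inl ha, Or.inr hb⟩
    · exact ⟨Or.inr ha, Or.inl hb⟩
  · rintro a (ha | ha)
    · exact Or.inl ⟨ha, ha, hrefl' a ha.1⟩
    · exact Or.inr (Or.inl ⟨ha, ha, hrefl'' a ha.1⟩)
  · -- antisymmetry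
    rintro a b hab hba
    rcases hab with ⟨ha, hb, h1⟩ | ⟨ha, hb, h1⟩ |
      ⟨ha, hb, m1, hm1, h1a, h1b⟩ | ⟨ha, hb, m1, hm1, h1a, h1b⟩ <;>
    rcases hba with ⟨hb', ha', k⟩ | ⟨hb', ha', k⟩ |
      ⟨hb', ha', m2, hm2, k1, k2⟩ | ⟨hb', ha', m2, hm2, k1, k2⟩
    -- (1,1)
    · exact hanti' _ _ h1 k
    -- (1,2)
    · exact hanti' _ _ h1
        ((hKrel b a (glue_bth hb hb') (glue_bth ha ha')).1 k)
    -- (1,3)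
    · exact hanti' _ _ h1
        (htrans' _ _ _ k1 ((hKrel m2 a hm2 (glue_bth ha ha')).1 k2))
    -- (1,4)
    · exact hanti' _ _ h1
        (htrans' _ _ _ ((hKrel b m2 (glue_bth hb hb') hm2).1 k1) k2)
    -- (2,1)
    · exact hanti'' _ _ h1
        ((hKrel b a (glue_bth hb' hb) (glue_bth ha' ha)).2 k)
    -- (2,2)
    · exact hanti'' _ _ h1 k
    -- (2,3)
    · exact hanti'' _ _ h1
        (htrans'' _ _ _ ((hKrel b m2 (glue_bth hb' hb) hm2).2 k1) k2)
    -- (2,4)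
    · exact hanti'' _ _ h1
        (htrans'' _ _ _ k1 ((hKrel m2 a hm2 (glue_bth ha' ha)).2 k2))
    -- (3,1)
    · exact hanti' _ _
        (htrans' _ _ _ h1a ((hKrel m1 b hm1 (glue_bth hb' hb)).1 h1b)) k
    -- (3,2)
    · exact hanti'' _ _
        (htrans'' _ _ _ ((hKrel a m1 (glue_bth ha ha') hm1).2 h1a) h1b) k
    -- (3,3)
    · refine hanti' _ _
        (htrans' _ _ _ h1a ((hKrel m1 b hm1 (glue_bth hb' hb)).1 h1b))
        (htrans' _ _ _ k1 ((hKrel m2 a hm2 (glue_bth ha ha')).1 k2))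
    -- (3,4)
    · have e1 : A''.rel m1 m2 := htrans'' _ _ _ h1b k1
      have e2 : A'.rel m1 m2 := (hKrel m1 m2 hm1 hm2).1 e1
      have e3 : A'.rel m2 m1 := htrans' _ _ _ k2 h1a
      have e4 : m1 = m2 := hanti' _ _ e2 e3
      have e5 : b = m1 := hanti'' _ _ (by rw [e4]; exact k1) h1b
      have f1 : A'.rel a b := by rw [e5]; exact h1a
      have f2 : A'.rel b a := by rw [e5, e4]; exact k2
      exact hanti' _ _ f1 f2
    -- (4,1)
    · exact hanti' _ _
        (htrans' _ _ _ ((hKrel a m1 (glue_bth ha' ha) hm1).1 h1a) h1b) k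
    -- (4,2)
    · exact hanti'' _ _
        (htrans'' _ _ _ h1a ((hKrel m1 b hm1 (glue_bth hb hb')).2 h1b)) k
    -- (4,3)
    · have e1 : A'.rel m1 m2 := htrans' _ _ _ h1b k1
      have e2 : A''.rel m1 m2 := (hKrel m1 m2 hm1 hm2).2 e1
      have e3 : A''.rel m2 m1 := htrans'' _ _ _ k2 h1a
      have e4 : m1 = m2 := hanti'' _ _ e2 e3
      have e5 : b = m1 := hanti' _ _ (by rw [e4]; exact k1) h1b
      have f1 : A''.rel a b := by rw [e5]; exact h1a
      have f2 : A''.rel b a := by rw [e5, e4]; exact k2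
      exact hanti'' _ _ f1 f2
    -- (4,4)
    · refine hanti' _ _
        (htrans' _ _ _ ((hKrel a m1 (glue_bth ha' ha) hm1).1 h1a) h1b)
        (htrans' _ _ _ ((hKrel b m2 (glue_bth hb hb') hm2).1 k1) k2)
  · -- transitivity
    rintro a b c hab hbc
    rcases hab with ⟨ha, hb, h1⟩ | ⟨ha, hb, h1⟩ |
      ⟨ha, hb, m1, hm1, h1a, h1b⟩ | ⟨ha, hb, m1, hm1, h1a, h1b⟩ <;>
    rcases hbc with ⟨hb2, hc, h2⟩ | ⟨hb2, hc, h2⟩ |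
      ⟨hb2, hc, m2, hm2, h2a, h2b⟩ | ⟨hb2, hc, m2, hm2, h2a, h2b⟩
    -- (1,1)
    · exact Or.inl ⟨ha, hc, htrans' _ _ _ h1 h2⟩
    -- (1,2)
    · exact Or.inr (Or.inr (Or.inl ⟨ha, hc, b, glue_bth hb hb2, h1, h2⟩))
    -- (1,3)
    · exact Or.inr (Or.inr (Or.inl ⟨ha, hc, m2, hm2, htrans' _ _ _ h1 h2a, h2b⟩))
    -- (1,4)
    · have : A'.rel b m2 := (hKrel b m2 (glue_bth hb hb2) hm2).1 h2a
      exact Or.inl ⟨ha, hc, htrans' _ _ _ h1 (htrans' _ _ _ this h2b)⟩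
    -- (2,1)
    · exact Or.inr (Or.inr (Or.inr ⟨ha, hc, b, glue_bth hb2 hb, h1, h2⟩))
    -- (2,2)
    · exact Or.inr (Or.inl ⟨ha, hc, htrans'' _ _ _ h1 h2⟩)
    -- (2,3)
    · have : A''.rel b m2 := (hKrel b m2 (glue_bth hb2 hb) hm2).2 h2a
      exact Or.inr (Or.inl ⟨ha, hc, htrans'' _ _ _ h1 (htrans'' _ _ _ this h2b)⟩)
    -- (2,4)
    · exact Or.inr (Or.inr (Or.inr ⟨ha, hc, m2, hm2, htrans'' _ _ _ h1 h2a, h2b⟩))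
    -- (3,1)
    · have : A'.rel m1 b := (hKrel m1 b hm1 (glue_bth hb2 hb)).1 h1b
      exact Or.inl ⟨ha, hc, htrans' _ _ _ h1a (htrans' _ _ _ this h2)⟩
    -- (3,2)
    · exact Or.inr (Or.inr (Or.inl ⟨ha, hc, m1, hm1, h1a, htrans'' _ _ _ h1b h2⟩))
    -- (3,3)
    · have : A'.rel m1 b := (hKrel m1 b hm1 (glue_bth hb2 hb)).1 h1b
      exact Or.inr (Or.inr (Or.inl ⟨ha, hc, m2, hm2,
        htrans' _ _ _ h1a (htrans' _ _ _ this h2a), h2b⟩))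
    -- (3,4)
    · have e1 : A''.rel m1 m2 := htrans'' _ _ _ h1b h2a
      have e2 : A'.rel m1 m2 := (hKrel m1 m2 hm1 hm2).1 e1
      exact Or.inl ⟨ha, hc, htrans' _ _ _ h1a (htrans' _ _ _ e2 h2b)⟩
    -- (4,1)
    · exact Or.inr (Or.inr (Or.inr ⟨ha, hc, m1, hm1, h1a, htrans' _ _ _ h1b h2⟩))
    -- (4,2)
    · have : A''.rel m1 b := (hKrel m1 b hm1 (glue_bth hb hb2)).2 h1b
      exact Or.inr (Or.inl ⟨ha, hc, htrans'' _ _ _ h1a (htrans'' _ _ _ this h2)⟩)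
    -- (4,3)
    · have e1 : A'.rel m1 m2 := htrans' _ _ _ h1b h2a
      have e2 : A''.rel m1 m2 := (hKrel m1 m2 hm1 hm2).2 e1
      exact Or.inr (Or.inl ⟨ha, hc, htrans'' _ _ _ h1a (htrans'' _ _ _ e2 h2b)⟩)
    -- (4,4)
    · have : A''.rel m1 b := (hKrel m1 b hm1 (glue_bth hb hb2)).2 h1b
      exact Or.inr (Or.inr (Or.inr ⟨ha, hc, m2, hm2,
        htrans'' _ _ _ h1a (htrans'' _ _ _ this h2a), h2b⟩))
  · -- finiteness of pasts
    rintro a _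
    have hs : {x | (glue chan O K A' A'').rel x a} ⊆
        ({x | A'.rel x a} ∪ {x | A''.rel x a} ∪
          (⋃ m ∈ {m | A''.rel m a}, {x | A'.rel x m})) ∪
          (⋃ m ∈ {m | A'.rel m a}, {x | A''.rel x m}) := by
      rintro x (⟨_, _, h⟩ | ⟨_, _, h⟩ | ⟨_, _, m, _, h1, h2⟩ | ⟨_, _, m, _, h1, h2⟩)
      · exact Or.inl (Or.inl (Or.inl h))
      · exact Or.inl (Or.inl (Or.inr h))
      · exact Or.inl (Or.inr (Set.mem_biUnion h2 h1))
      · exact Or.inr (Set.mem_biUnion h2 h1)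
    refine Set.Finite.subset ?_ hs
    refine Set.Finite.union (Set.Finite.union (Set.Finite.union ?_ ?_) ?_) ?_
    · exact predFin hS' a
    · exact predFin hS'' a
    · exact Set.Finite.biUnion (predFin hS'' a) (fun m _ => predFin hS' m)
    · exact Set.Finite.biUnion (predFin hS' a) (fun m _ => predFin hS'' m)

end GlueFacts


lemma glue_isExec {F : Frame LO CH D} {chan : E → CH} {msg : E → D}
    {O K : Set CH} {A' A'' : EvStruct E}
    (hA' : IsExec F chan msg A') (hA'' : IsExec F chan msg A'')
    (hKcar : ∀ e, chan e ∈ K → (e ∈ A''.carrier ↔ e ∈ A'.carrier))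
    (hKrel : ∀ a b, chan a ∈ K → chan b ∈ K → (A''.rel a b ↔ A'.rel a b))
    (hsplit : ∀ ℓ : LO, (∀ c, (F.sender c = ℓ ∨ F.recipt c = ℓ) → c ∈ O ∪ K) ∨
      (∀ c, (F.sender c = ℓ ∨ F.recipt c = ℓ) → c ∉ O)) :
    IsExec F chan msg (glue chan O K A' A'') := by
  refine ⟨glue_sysEv hA'.1 hA''.1 hKrel, ?_⟩
  intro ℓ
  rcases hsplit ℓ with hobs | hsrc
  · have hset : evProj F chan (glue chan O K A' A'') ℓ = evProj F chan A' ℓ := by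
      ext e
      simp only [evProj, Set.mem_setOf_eq, glue_carrier_iff]
      constructor
      · rintro ⟨he, hch⟩
        rcases he with h | h
        · exact ⟨h.1, hch⟩
        · have hk : chan e ∈ K := by
            rcases hobs (chan e) hch with h2 | h2
            · exact absurd h2 h.2
            · exact h2
          exact ⟨(hKcar e hk).1 h.1, hch⟩
      · rintro ⟨he, hch⟩
        exact ⟨Or.inl ⟨he, hobs (chan e) hch⟩, hch⟩
    have htags : ∀ a ∈ evProj F chan (glue chan O K A' A'') ℓ,
        a ∈ A'.carrier ∧ chan a ∈ O ∪ K := by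
      intro a haa
      have h2 : a ∈ evProj F chan A' ℓ := hset ▸ haa
      exact ⟨h2.1, hobs (chan a) h2.2⟩
    have hrel : ∀ a ∈ evProj F chan (glue chan O K A' A'') ℓ,
        ∀ b ∈ evProj F chan (glue chan O K A' A'') ℓ,
        ((glue chan O K A' A'').rel a b ↔ A'.rel a b) :=
      fun a ha b hb => glue_relA' hA'.1 hKrel (htags a ha) (htags b hb)
    constructor
    · intro a ha b hb
      rcases (hA'.2 ℓ).1 a (hset ▸ ha) b (hset ▸ hb) with h | h
      · exact Or.inl ((hrel a ha b hb).2 h)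
      · exact Or.inr ((hrel b hb a ha).2 h)
    · rw [projSeq_congr F chan msg _ A' ℓ hset hrel]
      exact (hA'.2 ℓ).2
  · have hset : evProj F chan (glue chan O K A' A'') ℓ = evProj F chan A'' ℓ := by
      ext e
      simp only [evProj, Set.mem_setOf_eq, glue_carrier_iff]
      constructor
      · rintro ⟨he, hch⟩
        rcases he with h | h
        · have hk : chan e ∈ K := by
            rcases h.2 with h2 | h2
            · exact absurd h2 (hsrc (chan e) hch)
            · exact h2
          exact ⟨(hKcar e hk).2 h.1, hch⟩
        · exact ⟨h.1, hch⟩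
      · rintro ⟨he, hch⟩
        exact ⟨Or.inr ⟨he, hsrc (chan e) hch⟩, hch⟩
    have htags : ∀ a ∈ evProj F chan (glue chan O K A' A'') ℓ,
        a ∈ A''.carrier ∧ chan a ∉ O := by
      intro a haa
      have h2 : a ∈ evProj F chan A'' ℓ := hset ▸ haa
      exact ⟨h2.1, hsrc (chan a) h2.2⟩
    have hrel : ∀ a ∈ evProj F chan (glue chan O K A' A'') ℓ,
        ∀ b ∈ evProj F chan (glue chan O K A' A'') ℓ,
        ((glue chan O K A' A'').rel a b ↔ A''.rel a b) :=
      fun a ha b hb => glue_relA'' hA''.1 hKrel (htags a ha) (htags b hb)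
    constructor
    · intro a ha b hb
      rcases (hA''.2 ℓ).1 a (hset ▸ ha) b (hset ▸ hb) with h | h
      · exact Or.inl ((hrel a ha b hb).2 h)
      · exact Or.inr ((hrel b hb a ha).2 h)
    · rw [projSeq_congr F chan msg _ A'' ℓ hset hrel]
      exact (hA''.2 ℓ).2

lemma glue_restrict_obs {chan : E → CH} {O K : Set CH} {A' A'' : EvStruct E}
    (hA' : IsSysEv A') (C : Set CH) (hCO : C ⊆ O) :
    evRestrict chan (glue chan O K A' A'') C = evRestrict chan A' C := by
  unfold evRestrict
  congr 1
  · ext e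
    simp only [Set.mem_setOf_eq, glue_carrier_iff]
    constructor
    · rintro ⟨he, hch⟩
      rcases he with h | h
      · exact ⟨h.1, hch⟩
      · exact absurd (hCO hch) h.2
    · rintro ⟨he, hch⟩
      exact ⟨Or.inl ⟨he, Or.inl (hCO hch)⟩, hch⟩
  · funext a b
    apply propext
    constructor
    · rintro ⟨hg, hca, hcb⟩
      refine ⟨?_, hca, hcb⟩
      rcases hg with ⟨_, _, h⟩ | ⟨ha2, _, _⟩ | ⟨_, hb2, _⟩ | ⟨ha2, _, _⟩
      · exact h
      · exact absurd (hCO hca) ha2.2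
      · exact absurd (hCO hcb) hb2.2
      · exact absurd (hCO hca) ha2.2
    · rintro ⟨h, hca, hcb⟩
      exact ⟨Or.inl ⟨⟨(hA'.1 a b h).1, Or.inl (hCO hca)⟩,
        ⟨(hA'.1 a b h).2, Or.inl (hCO hcb)⟩, h⟩, hca, hcb⟩

lemma glue_restrict_src {chan : E → CH} {O K : Set CH} {A' A'' : EvStruct E}
    (hA'' : IsSysEv A'') (C : Set CH) (hC : ∀ c ∈ C, c ∉ O ∧ c ∉ K) :
    evRestrict chan (glue chan O K A' A'') C = evRestrict chan A'' C := by
  unfold evRestrict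
  congr 1
  · ext e
    simp only [Set.mem_setOf_eq, glue_carrier_iff]
    constructor
    · rintro ⟨he, hch⟩
      rcases he with h | h
      · rcases h.2 with h2 | h2
        · exact absurd h2 (hC _ hch).1
        · exact absurd h2 (hC _ hch).2
      · exact ⟨h.1, hch⟩
    · rintro ⟨he, hch⟩
      exact ⟨Or.inr ⟨he, (hC _ hch).1⟩, hch⟩
  · funext a b
    apply propext
    constructor
    · rintro ⟨hg, hca, hcb⟩
      refine ⟨?_, hca, hcb⟩
      rcases hg with ⟨ha2, _, _⟩ | ⟨_, _, h⟩ | ⟨ha2, _, _⟩ | ⟨_, hb2, _⟩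
      · rcases ha2.2 with h2 | h2
        · exact absurd h2 (hC _ hca).1
        · exact absurd h2 (hC _ hca).2
      · exact h
      · rcases ha2.2 with h2 | h2
        · exact absurd h2 (hC _ hca).1
        · exact absurd h2 (hC _ hca).2
      · rcases hb2.2 with h2 | h2
        · exact absurd h2 (hC _ hcb).1
        · exact absurd h2 (hC _ hcb).2
    · rintro ⟨h, hca, hcb⟩
      exact ⟨Or.inr (Or.inl ⟨⟨(hA''.1 a b h).1, (hC _ hca).1⟩,
        ⟨(hA''.1 a b h).2, (hC _ hcb).1⟩, h⟩), hca, hcb⟩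

lemma glue_main (F : Frame LO CH D) (chan : E → CH) (msg : E → D)
    (lsrc lcut lobs : Set CH) (hcut : IsCut F lsrc lcut lobs)
    (A' A'' : EvStruct E) (hA' : IsExec F chan msg A') (hA'' : IsExec F chan msg A'')
    (hK : evRestrict chan A'' lcut = evRestrict chan A' lcut) :
    ∃ A : EvStruct E, IsExec F chan msg A ∧
      evRestrict chan A lobs = evRestrict chan A' lobs ∧
      evRestrict chan A lsrc = evRestrict chan A'' lsrc := by
  obtain ⟨⟨hd1, hd2, hd3⟩, hpath⟩ := hcut
  have hKcar : ∀ e, chan e ∈ lcut → (e ∈ A''.carrier ↔ e ∈ A'.carrier) := by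
    intro e he
    have h0 := congrArg EvStruct.carrier hK
    simp only [evRestrict] at h0
    have h2 := Set.ext_iff.1 h0 e
    simp only [Set.mem_setOf_eq] at h2
    constructor
    · intro h; exact (h2.1 ⟨h, he⟩).1
    · intro h; exact (h2.2 ⟨h, he⟩).1
  have hKrel : ∀ a b, chan a ∈ lcut → chan b ∈ lcut → (A''.rel a b ↔ A'.rel a b) := by
    intro a b ha hb
    have h0 := congrArg EvStruct.rel hK
    simp only [evRestrict] at h0
    have h2 := congrFun (congrFun h0 a) b
    constructor
    · intro h; exact (cast h2 ⟨h, ha, hb⟩).1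
    · intro h; exact (cast h2.symm ⟨h, ha, hb⟩).1
  have hsplit : ∀ ℓ : LO,
      (∀ c, (F.sender c = ℓ ∨ F.recipt c = ℓ) → c ∈ Ochan F lcut lobs ∪ lcut) ∨
      (∀ c, (F.sender c = ℓ ∨ F.recipt c = ℓ) → c ∉ Ochan F lcut lobs) := by
    intro ℓ
    by_cases hR : ℓ ∈ Rset F lcut lobs
    · left
      intro c hc
      by_cases hck : c ∈ lcut
      · exact Or.inr hck
      · refine Or.inl ⟨hck, ?_⟩
        rcases hc with h | h
        · exact Or.inl (by rw [h]; exact hR)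
        · exact Or.inr (by rw [h]; exact hR)
    · right
      intro c hc hcO
      obtain ⟨hs, hr⟩ := Ochan_ends hcO
      rcases hc with h | h
      · exact hR (h ▸ hs)
      · exact hR (h ▸ hr)
  refine ⟨glue chan (Ochan F lcut lobs) lcut A' A'',
    glue_isExec hA' hA'' hKcar hKrel hsplit, ?_, ?_⟩
  · refine glue_restrict_obs hA'.1 lobs ?_
    intro c hc
    refine ⟨Set.disjoint_right.1 hd3 hc, Or.inl ?_⟩
    exact ⟨F.sender c, ⟨c, hc, Or.inl rfl⟩, Relation.ReflTransGen.refl⟩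
  · refine glue_restrict_src hA''.1 lsrc ?_
    intro c hc
    constructor
    · intro hcO
      obtain ⟨hs, _⟩ := Ochan_ends hcO
      obtain ⟨ℓ0, hℓ0, hp⟩ := hs
      exact hpath ℓ0 hℓ0 (F.sender c) ⟨c, hc, Or.inl rfl⟩ hp
    · exact Set.disjoint_left.1 hd1 hc

/-- Cut principle for non-disclosure: if `lcut` is an undirected
cut between `lsrc` and `lobs` and there is no disclosure between `lsrc` and
`lcut`, then there is no disclosure between `lsrc` and `lobs`. -/
theorem cut_nondisclosure (F : Frame LO CH D) (chan : E → CH) (msg : E → D)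
    (lsrc lcut lobs : Set CH)
    (hcut : IsCut F lsrc lcut lobs)
    (hnd : NoDisclosure F chan msg lsrc lcut ∧ NoDisclosure F chan msg lcut lsrc) :
    NoDisclosure F chan msg lsrc lobs ∧ NoDisclosure F chan msg lobs lsrc := by
  obtain ⟨hnd1, hnd2⟩ := hnd
  constructor
  · intro B hB
    apply Set.Subset.antisymm
    · rintro B' ⟨A, hA, _, hA2⟩
      exact ⟨A, hA, hA2⟩
    · rintro B' ⟨A1, hA1, hA1obs⟩
      have h1 : evRestrict chan A1 lcut ∈ lruns F chan msg lcut := ⟨A1, hA1, rfl⟩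
      rw [← hnd1 B hB] at h1
      obtain ⟨A2, hA2, hA2src, hA2cut⟩ := h1
      obtain ⟨A, hAex, hAobs, hAsrc⟩ :=
        glue_main F chan msg lsrc lcut lobs hcut A1 A2 hA1 hA2 hA2cut
      exact ⟨A, hAex, by rw [hAsrc, hA2src], by rw [hAobs, hA1obs]⟩
  · intro B hB
    obtain ⟨A1, hA1, hA1obs⟩ := hB
    apply Set.Subset.antisymm
    · rintro B' ⟨A, hA, _, hA2⟩
      exact ⟨A, hA, hA2⟩
    · rintro B' hB'
      have hc1 : evRestrict chan A1 lcut ∈ lruns F chan msg lcut := ⟨A1, hA1, rfl⟩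
      rw [← hnd2 _ hc1] at hB'
      obtain ⟨A2, hA2, hA2cut, hA2src⟩ := hB'
      obtain ⟨A, hAex, hAobs, hAsrc⟩ :=
        glue_main F chan msg lsrc lcut lobs hcut A1 A2 hA1 hA2 hA2cut
      exact ⟨A, hAex, by rw [hAobs, hA1obs], by rw [hAsrc, hA2src]⟩
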